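/- The matrix C = [[y(x+iy)/2 + iz²/4, iz, x], [−x(x+iy)/2 − z²/4, z, y], [z(y−ix)/4, −(y+ix), z]] with entries in R = ℂ[x,y,z]/(x² + y² + z² − 1) is invertible over R, i.e., its determinant is a unit of R. -/

import Mathlib

open MvPolynomial Matrix

noncomputable section

def Isph : Ideal (MvPolynomial (Fin 3) ℂ) :=
  Ideal.span {X 0 ^ 2 + X 1 ^ 2 + X 2 ^ 2 - 1}

/-- `R = ℂ[x,y,z]/(x² + y² + z² − 1)`. -/
abbrev Rc : Type := MvPolynomial (Fin 3) ℂ ⧸ Isph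

def xR : Rc := Ideal.Quotient.mk Isph (X 0)
def yR : Rc := Ideal.Quotient.mk Isph (X 1)
def zR : Rc := Ideal.Quotient.mk Isph (X 2)
def iR : Rc := Ideal.Quotient.mk Isph (C Complex.I)

/-- `C = [[y(x+iy)/2 + iz²/4, iz, x], [−x(x+iy)/2 − z²/4, z, y], [z(y−ix)/4, −(y+ix), z]]`. -/
def Cm : Matrix (Fin 3) (Fin 3) Rc :=
  !![((2:ℂ)⁻¹ : ℂ) • (yR * (xR + iR * yR)) + ((4:ℂ)⁻¹ : ℂ) • (iR * zR ^ 2), iR * zR, xR;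
     -(((2:ℂ)⁻¹ : ℂ) • (xR * (xR + iR * yR))) - ((4:ℂ)⁻¹ : ℂ) • zR ^ 2, zR, yR;
     ((4:ℂ)⁻¹ : ℂ) • (zR * (yR - iR * xR)), -(yR + iR * xR), zR]


set_option maxHeartbeats 1000000 in
/-- the matrix `C` is invertible over `R`, i.e. its determinant is a unit. -/
theorem C_invertible : IsUnit Cm.det := by
  have hsph : xR ^ 2 + yR ^ 2 + zR ^ 2 = 1 := by
    have h : Ideal.Quotient.mk Isph (X 0 ^ 2 + X 1 ^ 2 + X 2 ^ 2) =
        Ideal.Quotient.mk Isph 1 := by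
      rw [Ideal.Quotient.eq]
      exact Ideal.subset_span rfl
    simpa [xR, yR, zR, map_add, map_pow] using h
  have hi : iR ^ 2 = -1 := by
    have h : iR ^ 2 = Ideal.Quotient.mk Isph (C (Complex.I ^ 2)) := by
      simp [iR, ← map_pow]
    rw [h, Complex.I_sq]
    simp
  apply IsUnit.of_mul_eq_one (a := Cm.det) (-(2 * iR))
  have hdet : Cm.det =
      (((2:ℂ)⁻¹ : ℂ) • (yR * (xR + iR * yR)) + ((4:ℂ)⁻¹ : ℂ) • (iR * zR ^ 2)) *
          (zR * zR - yR * -(yR + iR * xR)) -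
        (iR * zR) *
          ((-(((2:ℂ)⁻¹ : ℂ) • (xR * (xR + iR * yR))) - ((4:ℂ)⁻¹ : ℂ) • zR ^ 2) * zR -
            yR * (((4:ℂ)⁻¹ : ℂ) • (zR * (yR - iR * xR)))) +
        xR *
          ((-(((2:ℂ)⁻¹ : ℂ) • (xR * (xR + iR * yR))) - ((4:ℂ)⁻¹ : ℂ) • zR ^ 2) *
              -(yR + iR * xR) -
            zR * (((4:ℂ)⁻¹ : ℂ) • (zR * (yR - iR * xR)))) := by
    unfold Cm
    rw [Matrix.det_fin_three]
    simp only [Matrix.of_apply, Matrix.cons_val', Matrix.cons_val_zero, Matrix.cons_val_one,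
      Matrix.head_cons, Matrix.empty_val', Matrix.cons_val_fin_one, Matrix.head_fin_const,
      Matrix.cons_val_two, Matrix.tail_cons]
    ring
  rw [hdet]
  have hs : ∀ (c : ℂ) (r : Rc), c • r = algebraMap ℂ Rc c * r := fun c r => Algebra.smul_def c r
  simp only [hs]
  have h44 : algebraMap ℂ Rc (4:ℂ)⁻¹ = algebraMap ℂ Rc (2:ℂ)⁻¹ * algebraMap ℂ Rc (2:ℂ)⁻¹ := by
    rw [← _root_.map_mul]
    norm_num
  rw [h44]
  set u : Rc := algebraMap ℂ Rc (2:ℂ)⁻¹ with hu_def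
  have hu : 2 * u = 1 := by
    rw [hu_def, show (2 : Rc) = algebraMap ℂ Rc (2:ℂ) from (map_ofNat (algebraMap ℂ Rc) 2).symm,
      ← _root_.map_mul]
    norm_num
  linear_combination
    ((-1)*zR^4*iR^2 + (-2)*yR^2*zR^2*iR^2 + (-1)*yR^4*iR^2 + (-1)*xR*yR*zR^2*iR
      + (-1)*xR*yR*zR^2*iR^3 + (-1)*xR*yR^3*iR + (-1)*xR*yR^3*iR^3
      + (-2)*xR^2*zR^2*iR^2 + (-2)*xR^2*yR^2*iR^2 + (-1)*xR^3*yR*iR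
      + (-1)*xR^3*yR*iR^3 + (-1)*xR^4*iR^2 + (-2)*u*zR^4*iR^2
      + (-2)*u*yR^2*zR^2*iR^2 + (-2)*u*xR^2*zR^2*iR^2) * hu +
    ((-1)*iR^2 + (-1)*zR^2*iR^2 + (-1)*yR^2*iR^2 + (-1)*xR*yR*iR
      + (-1)*xR*yR*iR^3 + (-1)*xR^2*iR^2) * hsph +
    ((-1) + (-1)*xR*yR*iR) * hi
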